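/- Let 𝒞 = (C, Q, 𝒯) be a fully ≼₀-compatible counter system and 𝒞_α its 01-counter system. Then Traces(𝒞) = Traces(𝒞_α): the set of finite controller traces of runs of 𝒞 equals the set of finite controller traces of runs of 𝒞_α. -/

import Mathlib

namespace CS01

variable {C Q A : Type*}

/-- Configurations of a counter system: a controller state and a counter vector. -/
abbrev Conf (C Q : Type*) := C × (Q → ℕ)

/-- The order `≼₀`: same controller state, pointwise smaller counters,
and the same zero pattern. -/
def Le0 (x y : Conf C Q) : Prop :=
  x.1 = y.1 ∧ (∀ q, x.2 q ≤ y.2 q) ∧ ∀ q, (x.2 q = 0 ↔ y.2 q = 0)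

/-- The product order `≼₀ × ≼₀` on pairs of configurations. -/
def ProdLe0 (s t : Conf C Q × Conf C Q) : Prop :=
  Le0 s.1 t.1 ∧ Le0 s.2 t.2

/-- The abstraction `α`, mapping a configuration to its 01-abstraction. -/
def alpha (x : Conf C Q) : Conf C Q :=
  (x.1, fun q => if x.2 q = 0 then 0 else 1)

/-- Forward `≼₀`-compatibility of a step relation. -/
def FwdCompat (T : Set (Conf C Q × Conf C Q)) : Prop :=
  ∀ x y d, (x, y) ∈ T → Le0 x d → ∃ d', (d, d') ∈ T ∧ Le0 y d'

/-- Backward `≼₀`-compatibility of a step relation. -/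
def BwdCompat (T : Set (Conf C Q × Conf C Q)) : Prop :=
  ∀ x y d', (x, y) ∈ T → Le0 y d' → ∃ d, (d, d') ∈ T ∧ Le0 x d

/-- Steps of a counter system are size-preserving. -/
def SizePreserving [Fintype Q] (T : Set (Conf C Q × Conf C Q)) : Prop :=
  ∀ t ∈ T, ∑ q, t.1.2 q = ∑ q, t.2.2 q

/-- A step of the 01-counter system `𝒞_α`. -/
def AbsStep (T : Set (Conf C Q × Conf C Q)) (x' y' : Conf C Q) : Prop :=
  ∃ t ∈ T, alpha t.1 = x' ∧ alpha t.2 = y'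

/-- A finite run of the counter system, starting in an initial configuration. -/
def IsRun (T : Set (Conf C Q × Conf C Q)) (c0 : C) (Q0 : Set Q)
    {n : ℕ} (ρ : Fin (n + 1) → Conf C Q) : Prop :=
  (ρ 0).1 = c0 ∧ (∀ q ∉ Q0, (ρ 0).2 q = 0) ∧
    ∀ i : Fin n, (ρ i.castSucc, ρ i.succ) ∈ T

/-- A finite run of the 01-counter system, starting in an initial (0/1-valued)
abstract configuration. -/
def IsAbsRun (T : Set (Conf C Q × Conf C Q)) (c0 : C) (Q0 : Set Q)
    {n : ℕ} (σ : Fin (n + 1) → Conf C Q) : Prop :=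
  (σ 0).1 = c0 ∧ (∀ q, (σ 0).2 q ≤ 1) ∧ (∀ q ∉ Q0, (σ 0).2 q = 0) ∧
    ∀ i : Fin n, AbsStep T (σ i.castSucc) (σ i.succ)

/-- Reachability in the counter system. -/
def Reach (T : Set (Conf C Q × Conf C Q)) (c0 : C) (Q0 : Set Q)
    (x : Conf C Q) : Prop :=
  ∃ (n : ℕ) (ρ : Fin (n + 1) → Conf C Q), IsRun T c0 Q0 ρ ∧ ρ (Fin.last n) = x

/-- Reachability in the 01-counter system. -/
def AbsReach (T : Set (Conf C Q × Conf C Q)) (c0 : C) (Q0 : Set Q)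
    (x : Conf C Q) : Prop :=
  ∃ (n : ℕ) (σ : Fin (n + 1) → Conf C Q), IsAbsRun T c0 Q0 σ ∧ σ (Fin.last n) = x

/-- The counter vector obtained when `i` processes move from `p` to `p'`. -/
def moveN [DecidableEq Q] (v : Q → ℕ) (p p' : Q) (i : ℕ) : Q → ℕ :=
  fun q => v q - (if q = p then i else 0) + (if q = p' then i else 0)

/-- The (destuttered) controller trace of a finite run. -/
def TraceOf [DecidableEq C] {n : ℕ} (ρ : Fin (n + 1) → Conf C Q) : List C :=
  (List.ofFn fun i => (ρ i).1).destutter (· ≠ ·)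

/-- The finite controller traces of the counter system. -/
def Traces [DecidableEq C] (T : Set (Conf C Q × Conf C Q)) (c0 : C) (Q0 : Set Q) :
    Set (List C) :=
  {w | ∃ (n : ℕ) (ρ : Fin (n + 1) → Conf C Q), IsRun T c0 Q0 ρ ∧ w = TraceOf ρ}

/-- The finite controller traces of the 01-counter system. -/
def AbsTraces [DecidableEq C] (T : Set (Conf C Q × Conf C Q)) (c0 : C) (Q0 : Set Q) :
    Set (List C) :=
  {w | ∃ (n : ℕ) (σ : Fin (n + 1) → Conf C Q), IsAbsRun T c0 Q0 σ ∧ w = TraceOf σ}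

lemma alpha_eq_of_le0 {x y : Conf C Q} (h : Le0 x y) : alpha x = alpha y := by
  obtain ⟨h1, _, h3⟩ := h
  unfold alpha
  refine Prod.ext h1 (funext fun q => ?_)
  simp only
  by_cases hx : x.2 q = 0
  · rw [if_pos hx, if_pos ((h3 q).1 hx)]
  · rw [if_neg hx, if_neg (fun h => hx ((h3 q).2 h))]

lemma le0_max {x y : Conf C Q} (h : alpha x = alpha y) :
    Le0 x (x.1, fun q => max (x.2 q) (y.2 q)) ∧
      Le0 y (x.1, fun q => max (x.2 q) (y.2 q)) := by
  simp only [alpha, Prod.mk.injEq] at h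
  obtain ⟨h1, h2⟩ := h
  have hz : ∀ q, x.2 q = 0 ↔ y.2 q = 0 := by
    intro q
    have := congrFun h2 q
    by_cases hx : x.2 q = 0 <;> by_cases hy : y.2 q = 0 <;>
      simp [hx, hy] at this ⊢
  refine ⟨⟨rfl, fun q => le_max_left _ _, fun q => ?_⟩,
    ⟨h1.symm, fun q => le_max_right _ _, fun q => ?_⟩⟩
  · show x.2 q = 0 ↔ max (x.2 q) (y.2 q) = 0
    rw [Nat.max_eq_zero_iff]
    constructor
    · intro hx; exact ⟨hx, (hz q).1 hx⟩
    · intro h; exact h.1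
  · show y.2 q = 0 ↔ max (x.2 q) (y.2 q) = 0
    rw [Nat.max_eq_zero_iff]
    constructor
    · intro hy; exact ⟨(hz q).2 hy, hy⟩
    · intro h; exact h.2

/-- Backward lifting: a run whose last configuration is `≼₀` below `z` can be
lifted to a run ending exactly at `z`, configurationwise `≼₀`-above. -/
lemma bwdLift (T : Set (Conf C Q × Conf C Q)) (hb : BwdCompat T) (c0 : C) (Q0 : Set Q) :
    ∀ (n : ℕ) (ρ : Fin (n + 1) → Conf C Q), IsRun T c0 Q0 ρ →
      ∀ z, Le0 (ρ (Fin.last n)) z →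
        ∃ ρ' : Fin (n + 1) → Conf C Q, IsRun T c0 Q0 ρ' ∧ ρ' (Fin.last n) = z ∧
          ∀ i, Le0 (ρ i) (ρ' i) := by
  intro n
  induction n with
  | zero =>
    intro ρ hρ z hz
    refine ⟨fun _ => z, ⟨?_, ?_, fun i => i.elim0⟩, rfl, fun i => ?_⟩
    · rw [← hz.1]; exact hρ.1
    · intro q hq
      exact (hz.2.2 q).1 (hρ.2.1 q hq)
    · have : i = Fin.last 0 := by omega
      rw [this]; exact hz
  | succ n ih =>
    intro ρ hρ z hz
    have hstep : (ρ (Fin.last n).castSucc, ρ (Fin.last n).succ) ∈ T := hρ.2.2 (Fin.last n)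
    rw [Fin.succ_last] at hstep
    obtain ⟨d, hd, hled⟩ := hb _ _ _ hstep hz
    have hinit : IsRun T c0 Q0 (Fin.init ρ) := by
      refine ⟨hρ.1, hρ.2.1, fun i => ?_⟩
      have := hρ.2.2 i.castSucc
      exact this
    have hlast : (Fin.init ρ) (Fin.last n) = ρ (Fin.last n).castSucc := rfl
    obtain ⟨ρ'', hρ'', hρ''last, hρ''le⟩ := ih (Fin.init ρ) hinit d (hlast ▸ hled)
    refine ⟨Fin.snoc ρ'' z, ⟨?_, ?_, ?_⟩, by simp, ?_⟩
    · have : (Fin.snoc ρ'' z : Fin (n+2) → Conf C Q) 0 = ρ'' 0 := by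
        rw [show (0 : Fin (n+2)) = Fin.castSucc 0 by rfl, Fin.snoc_castSucc]
      rw [this]; exact hρ''.1
    · intro q hq
      have : (Fin.snoc ρ'' z : Fin (n+2) → Conf C Q) 0 = ρ'' 0 := by
        rw [show (0 : Fin (n+2)) = Fin.castSucc 0 by rfl, Fin.snoc_castSucc]
      rw [this]; exact hρ''.2.1 q hq
    · intro i
      refine Fin.lastCases ?_ ?_ i
      · rw [Fin.succ_last, Fin.snoc_castSucc, Fin.snoc_last, hρ''last]
        exact hd
      · intro j
        rw [Fin.succ_castSucc, Fin.snoc_castSucc, Fin.snoc_castSucc]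
        exact hρ''.2.2 j
    · intro i
      refine Fin.lastCases ?_ ?_ i
      · rw [Fin.snoc_last]; exact hz
      · intro j
        rw [Fin.snoc_castSucc]
        have := hρ''le j
        simpa [Fin.init] using this

/-- Every abstract run is the `α`-image of a concrete run. -/
lemma liftAbsRun (T : Set (Conf C Q × Conf C Q)) (hf : FwdCompat T) (hb : BwdCompat T)
    (c0 : C) (Q0 : Set Q) :
    ∀ (n : ℕ) (σ : Fin (n + 1) → Conf C Q), IsAbsRun T c0 Q0 σ →
      ∃ ρ : Fin (n + 1) → Conf C Q, IsRun T c0 Q0 ρ ∧ ∀ i, alpha (ρ i) = σ i := by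
  intro n
  induction n with
  | zero =>
    intro σ hσ
    refine ⟨σ, ⟨hσ.1, hσ.2.2.1, fun i => i.elim0⟩, fun i => ?_⟩
    have hle := hσ.2.1
    have : i = 0 := by omega
    subst this
    unfold alpha
    refine Prod.ext rfl (funext fun q => ?_)
    have := hle q
    simp only
    split <;> omega
  | succ n ih =>
    intro σ hσ
    have hinit : IsAbsRun T c0 Q0 (Fin.init σ) := by
      refine ⟨hσ.1, hσ.2.1, hσ.2.2.1, fun i => ?_⟩
      have := hσ.2.2.2 i.castSucc
      exact this
    obtain ⟨ρ, hρ, hα⟩ := ih (Fin.init σ) hinit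
    obtain ⟨⟨x, y⟩, hxyT, hαx, hαy⟩ := hσ.2.2.2 (Fin.last n)
    have hαρ : alpha (ρ (Fin.last n)) = alpha x := by
      rw [hα (Fin.last n)]
      show (Fin.init σ) (Fin.last n) = alpha x
      rw [hαx]; rfl
    set z : Conf C Q := (x.1, fun q => max (x.2 q) ((ρ (Fin.last n)).2 q)) with hzdef
    have hxz : Le0 x z := (le0_max hαρ.symm).1
    have hρz : Le0 (ρ (Fin.last n)) z := (le0_max hαρ.symm).2
    obtain ⟨y', hy'T, hy'le⟩ := hf x y z hxyT hxz
    obtain ⟨ρ', hρ', hρ'last, hρ'le⟩ := bwdLift T hb c0 Q0 n ρ hρ z hρz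
    refine ⟨Fin.snoc ρ' y', ⟨?_, ?_, ?_⟩, ?_⟩
    · have : (Fin.snoc ρ' y' : Fin (n+2) → Conf C Q) 0 = ρ' 0 := by
        rw [show (0 : Fin (n+2)) = Fin.castSucc 0 by rfl, Fin.snoc_castSucc]
      rw [this]; exact hρ'.1
    · intro q hq
      have : (Fin.snoc ρ' y' : Fin (n+2) → Conf C Q) 0 = ρ' 0 := by
        rw [show (0 : Fin (n+2)) = Fin.castSucc 0 by rfl, Fin.snoc_castSucc]
      rw [this]; exact hρ'.2.1 q hq
    · intro i
      refine Fin.lastCases ?_ ?_ i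
      · rw [Fin.succ_last, Fin.snoc_castSucc, Fin.snoc_last, hρ'last]
        exact hy'T
      · intro j
        rw [Fin.succ_castSucc, Fin.snoc_castSucc, Fin.snoc_castSucc]
        exact hρ'.2.2 j
    · intro i
      refine Fin.lastCases ?_ ?_ i
      · rw [Fin.snoc_last, ← Fin.succ_last, ← alpha_eq_of_le0 hy'le, hαy, Fin.succ_last]
      · intro j
        rw [Fin.snoc_castSucc, ← alpha_eq_of_le0 (hρ'le j), hα j]
        rfl

/-- For a fully `≼₀`-compatible counter system `𝒞`, the set of
finite controller traces of `𝒞` equals that of its 01-counter system `𝒞_α`. -/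
theorem stmt14 [Fintype C] [Fintype Q] [Nonempty C] [Nonempty Q] [DecidableEq C]
    (T : Set (Conf C Q × Conf C Q)) (hsize : SizePreserving T)
    (hf : FwdCompat T) (hb : BwdCompat T) (c0 : C) (Q0 : Set Q) :
    Traces T c0 Q0 = AbsTraces T c0 Q0 := by
  ext w
  constructor
  · rintro ⟨n, ρ, hρ, rfl⟩
    refine ⟨n, fun i => alpha (ρ i), ⟨hρ.1, fun q => ?_, fun q hq => ?_, fun i => ?_⟩, ?_⟩
    · unfold alpha; simp only; split <;> omega
    · simp [alpha, hρ.2.1 q hq]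
    · exact ⟨(ρ i.castSucc, ρ i.succ), hρ.2.2 i, rfl, rfl⟩
    · unfold TraceOf alpha
      rfl
  · rintro ⟨n, σ, hσ, rfl⟩
    obtain ⟨ρ, hρ, hα⟩ := liftAbsRun T hf hb c0 Q0 n σ hσ
    refine ⟨n, ρ, hρ, ?_⟩
    unfold TraceOf
    rw [show (fun i => (ρ i).1) = (fun i : Fin (n+1) => (σ i).1) from
      funext fun i => by rw [← hα i]; rfl]

end CS01
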